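/- For any graph G with no isolated vertex and any noncomplete graph H, γ_r(G∘H) ≤ 4·γ(G). -/

import Mathlib

open Finset
open scoped Classical

/-- The lexicographic product of two simple graphs. -/
def lexProd {α β : Type*} (G : SimpleGraph α) (H : SimpleGraph β) :
    SimpleGraph (α × β) where
  Adj p q := G.Adj p.1 q.1 ∨ (p.1 = q.1 ∧ H.Adj p.2 q.2)
  symm := by
    constructor
    rintro ⟨a, b⟩ ⟨c, d⟩ (h | ⟨h1, h2⟩)
    · exact Or.inl h.symm
    · exact Or.inr ⟨h1.symm, h2.symm⟩
  loopless := by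
    constructor
    rintro ⟨a, b⟩ (h | ⟨h1, h2⟩)
    · exact G.loopless.irrefl a h
    · exact H.loopless.irrefl b h2

/-- A vertex `w` is undefended with respect to `g` if `g w = 0` and `g x = 0`
for every neighbour `x` of `w`. -/
def Undefended {α : Type*} (G : SimpleGraph α) (g : α → ℕ) (w : α) : Prop :=
  g w = 0 ∧ ∀ x, G.Adj w x → g x = 0

/-- A weak Roman dominating function. -/
def IsWRDF {α : Type*} (G : SimpleGraph α) (f : α → ℕ) : Prop :=
  (∀ v, f v ≤ 2) ∧
    ∀ v, f v = 0 → ∃ u, G.Adj u v ∧ 1 ≤ f u ∧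
      ∀ w, ¬ Undefended G (Function.update (Function.update f v 1) u (f u - 1)) w

/-- The weak Roman domination number. -/
noncomputable def weakRomanNumber {α : Type*} (G : SimpleGraph α) [Fintype α] : ℕ :=
  sInf {k | ∃ f : α → ℕ, IsWRDF G f ∧ ∑ v, f v = k}

/-- A dominating set. -/
def IsDomSet {α : Type*} (G : SimpleGraph α) (D : Finset α) : Prop :=
  ∀ v ∉ D, ∃ u ∈ D, G.Adj u v

/-- The domination number. -/
noncomputable def domNumber {α : Type*} (G : SimpleGraph α) [Fintype α] : ℕ :=
  sInf {k | ∃ D : Finset α, IsDomSet G D ∧ D.card = k}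

/-- A total dominating set. -/
def IsTotalDomSet {α : Type*} (G : SimpleGraph α) (S : Finset α) : Prop :=
  ∀ v, ∃ u ∈ S, G.Adj u v

/-- The total domination number. -/
noncomputable def totalDomNumber {α : Type*} (G : SimpleGraph α) [Fintype α] : ℕ :=
  sInf {k | ∃ S : Finset α, IsTotalDomSet G S ∧ S.card = k}

/-- A double total dominating set: every vertex has at least two neighbours in `S`. -/
def IsDoubleTotalDomSet {α : Type*} (G : SimpleGraph α) (S : Finset α) : Prop :=
  ∀ v, ∃ u₁ ∈ S, ∃ u₂ ∈ S, u₁ ≠ u₂ ∧ G.Adj u₁ v ∧ G.Adj u₂ v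

/-- The double total domination number. -/
noncomputable def doubleTotalDomNumber {α : Type*} (G : SimpleGraph α) [Fintype α] : ℕ :=
  sInf {k | ∃ S : Finset α, IsDoubleTotalDomSet G S ∧ S.card = k}

/-- A 2-packing: the closed neighbourhoods of distinct members are disjoint. -/
def IsTwoPacking {α : Type*} (G : SimpleGraph α) (X : Finset α) : Prop :=
  ∀ u ∈ X, ∀ v ∈ X, u ≠ v →
    ∀ w, ¬ ((w = u ∨ G.Adj u w) ∧ (w = v ∨ G.Adj v w))

/-- The 2-packing number. -/
noncomputable def twoPackingNumber {α : Type*} (G : SimpleGraph α) [Fintype α] : ℕ :=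
  sSup {k | ∃ X : Finset α, IsTwoPacking G X ∧ X.card = k}

/-- A secure dominating set. -/
def IsSecureDomSet {α : Type*} (G : SimpleGraph α) (S : Finset α) : Prop :=
  IsDomSet G S ∧ ∀ v ∉ S, ∃ u ∈ S, G.Adj u v ∧ IsDomSet G (insert v (S.erase u))

/-- The secure domination number. -/
noncomputable def secureDomNumber {α : Type*} (G : SimpleGraph α) [Fintype α] : ℕ :=
  sInf {k | ∃ S : Finset α, IsSecureDomSet G S ∧ S.card = k}

/-- The corona product of two graphs. -/
def corona {α β : Type*} (G₁ : SimpleGraph α) (G₂ : SimpleGraph β) :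
    SimpleGraph (α ⊕ α × β) where
  Adj x y :=
    match x, y with
    | .inl a, .inl a' => G₁.Adj a a'
    | .inl a, .inr p => a = p.1
    | .inr p, .inl a => p.1 = a
    | .inr p, .inr q => p.1 = q.1 ∧ G₂.Adj p.2 q.2
  symm := by
    constructor
    rintro (a | p) (a' | q) h
    · exact h.symm
    · exact h.symm
    · exact h.symm
    · exact ⟨h.1.symm, h.2.symm⟩
  loopless := by
    constructor
    rintro (a | p) h
    · exact G₁.loopless.irrefl a h
    · exact G₂.loopless.irrefl p.2 h.2


/-!
Take a minimum dominating set `D` of `G` and add one neighbour of each of its vertices: since `G`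
has no isolated vertex this gives a total dominating set `S` with `|S| ≤ 2γ(G)`. For two distinct
vertices `a, b` of `H`, every vertex `(x, y)` of `G ∘ H` is adjacent to both `(s, a)` and `(s, b)`
for a neighbour `s ∈ S` of `x`, so `S × {a, b}` is a double total dominating set of size
`≤ 4γ(G)`. Finally, the indicator of a double total dominating set is a weak Roman dominating
function: after a guard moves from `u` to a vertex `v`, every vertex still has a guarded neighbour
among its two neighbours in the set, since at most one of them is `u`.
-/

lemma exists_isDomSet_card_eq_domNumber {α : Type*} [Fintype α] (G : SimpleGraph α) :
    ∃ D : Finset α, IsDomSet G D ∧ #D = domNumber G :=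
  Nat.sInf_mem (s := {k | ∃ D : Finset α, IsDomSet G D ∧ #D = k})
    ⟨#(univ : Finset α), univ, fun v hv => absurd (mem_univ v) hv, rfl⟩

lemma weakRomanNumber_le_sum {α : Type*} [Fintype α] {G : SimpleGraph α} {f : α → ℕ}
    (hf : IsWRDF G f) : weakRomanNumber G ≤ ∑ v, f v :=
  Nat.sInf_le ⟨f, hf, rfl⟩

lemma IsDomSet.exists_isTotalDomSet_card_le_two_mul {α : Type*} {G : SimpleGraph α}
    {D : Finset α} (hD : IsDomSet G D) (hG : ∀ v, ∃ u, G.Adj v u) :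
    ∃ S : Finset α, IsTotalDomSet G S ∧ #S ≤ 2 * #D := by
  choose nbr hnbr using hG
  refine ⟨D ∪ D.image nbr, fun x => ?_, ?_⟩
  · by_cases hx : x ∈ D
    · exact ⟨nbr x, mem_union_right _ (mem_image_of_mem _ hx), (hnbr x).symm⟩
    · obtain ⟨u, hu, hux⟩ := hD x hx
      exact ⟨u, mem_union_left _ hu, hux⟩
  · calc #(D ∪ D.image nbr) ≤ #D + #(D.image nbr) := card_union_le _ _
      _ ≤ 2 * #D := by linarith [card_image_le (s := D) (f := nbr)]

lemma IsTotalDomSet.isDoubleTotalDomSet_lexProd {α β : Type*} {G : SimpleGraph α}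
    {S : Finset α} (hS : IsTotalDomSet G S) (H : SimpleGraph β) {a b : β} (hab : a ≠ b) :
    IsDoubleTotalDomSet (lexProd G H) (S ×ˢ {a, b}) := by
  rintro ⟨x, y⟩
  obtain ⟨s, hs, hsx⟩ := hS x
  exact ⟨(s, a), by simp [hs], (s, b), by simp [hs], by simp [hab], Or.inl hsx, Or.inl hsx⟩

lemma IsDoubleTotalDomSet.isWRDF_indicator {α : Type*} {G : SimpleGraph α} {T : Finset α}
    (hT : IsDoubleTotalDomSet G T) : IsWRDF G (fun v => if v ∈ T then 1 else 0) := by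
  refine ⟨fun v => by dsimp only; split_ifs <;> omega, fun v hv => ?_⟩
  obtain ⟨u, hu, -, -, -, huv, -⟩ := hT v
  refine ⟨u, huv, by simp [hu], ?_⟩
  rintro w ⟨-, hw⟩
  obtain ⟨u₁, hu₁, u₂, hu₂, hne, hu₁w, hu₂w⟩ := hT w
  obtain ⟨x, hx, hxu, hxw⟩ : ∃ x ∈ T, x ≠ u ∧ G.Adj x w := by
    by_cases h : u₁ = u
    · exact ⟨u₂, hu₂, h ▸ hne.symm, hu₂w⟩
    · exact ⟨u₁, hu₁, h, hu₁w⟩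
  have hx0 := hw x hxw.symm
  rw [Function.update_of_ne hxu, Function.update_apply] at hx0
  split_ifs at hx0

lemma IsDoubleTotalDomSet.weakRomanNumber_le_card {α : Type*} [Fintype α] {G : SimpleGraph α}
    {T : Finset α} (hT : IsDoubleTotalDomSet G T) : weakRomanNumber G ≤ #T :=
  (weakRomanNumber_le_sum hT.isWRDF_indicator).trans_eq (by simp)

/-- For any graph `G` with no isolated vertex and any noncomplete
graph `H`, `γ_r(G∘H) ≤ 4·γ(G)`. -/
theorem weakRoman_lexProd_le_four_mul_dom {α β : Type*} [Fintype α] [Fintype β]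
    (G : SimpleGraph α) (H : SimpleGraph β)
    (hG : ∀ v : α, ∃ u, G.Adj v u)
    (hH : ∃ a b : β, a ≠ b ∧ ¬ H.Adj a b) :
    weakRomanNumber (lexProd G H) ≤ 4 * domNumber G := by
  obtain ⟨a, b, hab, -⟩ := hH
  obtain ⟨D, hD, hDcard⟩ := exists_isDomSet_card_eq_domNumber G
  obtain ⟨S, hS, hScard⟩ := hD.exists_isTotalDomSet_card_le_two_mul hG
  calc weakRomanNumber (lexProd G H) ≤ #(S ×ˢ {a, b}) :=
        (hS.isDoubleTotalDomSet_lexProd H hab).weakRomanNumber_le_card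
    _ = 2 * #S := by rw [card_product, card_pair hab, mul_comm]
    _ ≤ 4 * domNumber G := by omega
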